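/- (Certified robustness of multi-label smoothing based watermarking.) Let g map images to k-element subsets of {1,…,m}, let L = {i : w_t[i]=1} with |L| = ‖w_t‖₁, and define D_s(z)[i] = 1 iff i ∈ g(z). Suppose e̲ and e̅ satisfy |L ∩ g(x+δ)| ≥ e̲ and |(complement of L) ∩ g(x+δ)| ≥ e̅ for all ‖δ‖₂ < R. Then for all ‖δ‖₂ < R: 1 − (‖w_t‖₁ + k − 2e̲)/m ≤ BA(D_s(x+δ), w_t) ≤ 1 − (‖w_t‖₁ − k + 2e̅)/m. -/

import Mathlib

/-!
The decoded watermark is the indicator of `A = g (x + δ)`, and it disagrees with `w_t` exactly on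
`L ∆ A`, whose size is `|L| + k - 2 |L ∩ A| = |L| - k + 2 |Lᶜ ∩ A|`. So the bit accuracy is an
increasing function of `|L ∩ A|` and a decreasing one of `|Lᶜ ∩ A|`, and the certified bounds
on these two counts turn into the two bounds on the accuracy.
-/

open Finset

/-- Bitwise accuracy: fraction of indices where the two bitstrings agree. -/
noncomputable def BA (m : ℕ) (w wt : Fin m → Bool) : ℝ :=
  ((univ.filter fun i => w i = wt i).card : ℝ) / m

namespace Finset

variable {ι : Type*} [Fintype ι] [DecidableEq ι]

theorem card_inter_add_card_compl_inter (s t : Finset ι) : #(s ∩ t) + #(sᶜ ∩ t) = #t := by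
  rw [inter_comm, inter_comm sᶜ, ← sdiff_eq_inter_compl, card_inter_add_card_sdiff]

theorem card_filter_decide_mem_eq_add_card_union (s t : Finset ι) :
    #{i | decide (i ∈ s) = decide (i ∈ t)} + #(s ∪ t) = Fintype.card ι + #(s ∩ t) := by
  have hagree : ({i | decide (i ∈ s) = decide (i ∈ t)} : Finset ι) = (s ∩ t) ∪ (s ∪ t)ᶜ := by
    ext i; by_cases hs : i ∈ s <;> by_cases ht : i ∈ t <;> simp [hs, ht]
  have hdisj : Disjoint (s ∩ t) (s ∪ t)ᶜ :=
    disjoint_compl_right.mono_left (inter_subset_union)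
  rw [hagree, card_union_of_disjoint hdisj, add_assoc, card_compl_add_card, add_comm]

end Finset

theorem BA_decide_mem_eq {m : ℕ} (hm : 0 < m) (s t : Finset (Fin m)) :
    BA m (fun i => decide (i ∈ s)) (fun i => decide (i ∈ t)) =
      1 - ((#t : ℝ) + #s - 2 * #(t ∩ s)) / m := by
  have hcount := card_filter_decide_mem_eq_add_card_union s t
  have hunion := card_union_add_card_inter s t
  rw [Fintype.card_fin] at hcount
  have hm' : (m : ℝ) ≠ 0 := by positivity
  rw [BA, inter_comm t]
  field_simp
  have hcount' := congrArg (Nat.cast : ℕ → ℝ) hcount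
  have hunion' := congrArg (Nat.cast : ℕ → ℝ) hunion
  push_cast at hcount' hunion'
  linarith

theorem stmt16 {E : Type*} [NormedAddCommGroup E] (m k : ℕ) (hm : 0 < m)
    (wt : Fin m → Bool) (L : Finset (Fin m))
    (hL : L = univ.filter fun i => wt i = true)
    (g : E → Finset (Fin m)) (hk : ∀ z, (g z).card = k)
    (Ds : E → Fin m → Bool) (hDs : Ds = fun z i => decide (i ∈ g z))
    (x : E) (R : ℝ) (elow eup : ℕ)
    (helow : ∀ δ : E, ‖δ‖ < R → elow ≤ (L ∩ g (x + δ)).card)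
    (heup : ∀ δ : E, ‖δ‖ < R → eup ≤ (Lᶜ ∩ g (x + δ)).card) :
    ∀ δ : E, ‖δ‖ < R →
      1 - ((L.card : ℝ) + k - 2 * elow) / m ≤ BA m (Ds (x + δ)) wt ∧
        BA m (Ds (x + δ)) wt ≤ 1 - ((L.card : ℝ) - k + 2 * eup) / m := by
  intro δ hδ
  have hwt : wt = fun i => decide (i ∈ L) := by
    ext i; simp [hL]
  have hsplit : (#(L ∩ g (x + δ)) : ℝ) + #(Lᶜ ∩ g (x + δ)) = k := by
    exact_mod_cast (card_inter_add_card_compl_inter L _).trans (hk _)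
  have hlow : (elow : ℝ) ≤ #(L ∩ g (x + δ)) := by exact_mod_cast helow δ hδ
  have hup : (eup : ℝ) ≤ #(Lᶜ ∩ g (x + δ)) := by exact_mod_cast heup δ hδ
  rw [hDs, hwt, BA_decide_mem_eq hm, hk]
  constructor
  · gcongr
  · gcongr; linarith
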